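/- There exists a graph G and a set P of separations of G satisfying the profile axioms (P1) and (P2) that is not principal. Concretely: let G be the countably infinite star with center c and leaves v₁, v₂, …, let F be a non-principal ultrafilter on ℕ, and let P consist of all separations (A_F, B_F) with B_F = {c} ∪ {v_i : i ∈ F} and A_F = (V(G)∖B_F) ∪ {c} for F ∈ 𝓕, together with all separations (A, V(G)) with |A| ≤ 1. Then P is a profile but not a principal profile. -/

import Mathlib

open Set

universe u

variable {V : Type*}

/-- A separation of a graph `G`: a pair of vertex sets covering `V` with no edge
between `A \ B` and `B \ A`. -/
def IsSep (G : SimpleGraph V) (A B : Set V) : Prop :=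
  A ∪ B = Set.univ ∧ ∀ a ∈ A \ B, ∀ b ∈ B \ A, ¬ G.Adj a b

/-- The order on separations: `(A,B) ≤ (C,D)` iff `A ⊆ C` and `D ⊆ B`. -/
def SepLE (A B C D : Set V) : Prop := A ⊆ C ∧ D ⊆ B

/-- Two separations are nested if one is comparable with the other or its reverse. -/
def Nested (A B C D : Set V) : Prop :=
  SepLE A B C D ∨ SepLE C D A B ∨ SepLE A B D C ∨ SepLE D C A B

/-- A set of separations is consistent. -/
def Consistent (P : Set (Set V × Set V)) : Prop :=
  ∀ A B C D : Set V, (A, B) ∈ P → SepLE C D A B → (D, C) ∉ P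

/-- The profile axiom (P2). -/
def P2 (P : Set (Set V × Set V)) : Prop :=
  ∀ p ∈ P, ∀ q ∈ P, (p.2 ∩ q.2, p.1 ∪ q.1) ∉ P

/-- A profile is principal if every subfamily with equal separators has a common
vertex in the intersection of the big sides minus the small sides. -/
def Principal (P : Set (Set V × Set V)) : Prop :=
  ∀ Q ⊆ P, Q.Nonempty → (∀ p ∈ Q, ∀ q ∈ Q, p.1 ∩ p.2 = q.1 ∩ q.2) →
    (⋂ p ∈ Q, (p.2 \ p.1)).Nonempty

/-- Robustness of a set of separations. -/
def Robust (G : SimpleGraph V) (P : Set (Set V × Set V)) : Prop :=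
  ∀ A B : Set V, (A, B) ∈ P → (A ∩ B).Finite →
    ∀ C D : Set V, IsSep G C D → (C ∩ D).Finite →
      ((B ∩ C) ∩ (A ∪ D)).ncard < (A ∩ B).ncard →
      ((B ∩ D) ∩ (A ∪ C)).ncard < (A ∩ B).ncard →
      ((B ∩ C, A ∪ D) ∉ P ∨ (B ∩ D, A ∪ C) ∉ P)

/-- `C` is a (connected) component of `G - X`. -/
def IsComponent (G : SimpleGraph V) (X C : Set V) : Prop :=
  C.Nonempty ∧ C ⊆ Xᶜ ∧ (G.induce C).Connected ∧
    ∀ D : Set V, C ⊆ D → D ⊆ Xᶜ → (G.induce D).Connected → D = C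

/-- The neighbourhood of a vertex set. -/
def setNbhd (G : SimpleGraph V) (C : Set V) : Set V :=
  {v | v ∉ C ∧ ∃ c ∈ C, G.Adj v c}

/-- A separation `(A,B)` distinguishes two profiles. -/
def Distinguishes (A B : Set V) (P P' : Set (Set V × Set V)) : Prop :=
  ((A, B) ∈ P ∧ (B, A) ∈ P') ∨ ((A, B) ∈ P' ∧ (B, A) ∈ P)

/-- A tree-decomposition of `G` modelled on a tree `T`. -/
structure TreeDecomp (G : SimpleGraph V) {τ : Type*} (T : SimpleGraph τ) where
  bag : τ → Set V
  isTree : T.IsTree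
  covers : ∀ v : V, ∃ t, v ∈ bag t
  coversEdges : ∀ u v : V, G.Adj u v → ∃ t, u ∈ bag t ∧ v ∈ bag t
  pathInter : ∀ t₁ t₂ t₃ : τ, ∀ p : T.Walk t₁ t₃, p.IsPath → t₂ ∈ p.support →
    bag t₁ ∩ bag t₃ ⊆ bag t₂

/-- The union of the bags on the side of `s` of the edge `ss'` of the decomposition tree. -/
def sideSet {G : SimpleGraph V} {τ : Type*} {T : SimpleGraph τ} (td : TreeDecomp G T)
    (s s' : τ) : Set V :=
  ⋃ t ∈ {t | (T.deleteEdges {s(s, s')}).Reachable s t}, td.bag t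

/-- The torso of the part `bag t`, as a graph on `V` whose edges live inside `bag t`. -/
def torso (G : SimpleGraph V) {τ : Type*} (T : SimpleGraph τ) (td : TreeDecomp G T)
    (t : τ) : SimpleGraph V where
  Adj x y := x ≠ y ∧ x ∈ td.bag t ∧ y ∈ td.bag t ∧
    (G.Adj x y ∨ ∃ t', T.Adj t t' ∧ x ∈ td.bag t' ∧ y ∈ td.bag t')
  symm := by
    refine ⟨?_⟩
    rintro x y ⟨h1, h2, h3, h4⟩
    refine ⟨h1.symm, h3, h2, ?_⟩
    rcases h4 with h | ⟨t', ht, hx, hy⟩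
    · exact Or.inl h.symm
    · exact Or.inr ⟨t', ht, hy, hx⟩
  loopless := ⟨by rintro x ⟨h1, -⟩; exact h1 rfl⟩

/-- The profile induced by an end of `G`: all separations of finite order such that the
component of the complement of the separator in which the end lives is contained in the
big side. -/
def endProfile (G : SimpleGraph V) (e : ↥G.end) : Set (Set V × Set V) :=
  {p | IsSep G p.1 p.2 ∧ ∃ hf : (p.1 ∩ p.2).Finite,
    ((e.val (Opposite.op hf.toFinset)).supp ⊆ p.2)}


/-- The countably infinite star with centre `none`. -/
def starGraph : SimpleGraph (Option ℕ) :=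
  SimpleGraph.fromRel (fun x _ => x = none)

/-- `B_F = {c} ∪ {vᵢ : i ∈ F}` in the star. -/
def Bset (F : Set ℕ) : Set (Option ℕ) := {none} ∪ {x | ∃ i ∈ F, x = some i}

/-- `A_F = (V ∖ B_F) ∪ {c}` in the star. -/
def Aset (F : Set ℕ) : Set (Option ℕ) := (Set.univ \ Bset F) ∪ {none}

/-- The set of separations built from a non-principal ultrafilter on `ℕ`. -/
def starP (F : Ultrafilter ℕ) : Set (Set (Option ℕ) × Set (Option ℕ)) :=
  {p | ∃ s ∈ F, p = (Aset s, Bset s)} ∪ {p | p.2 = Set.univ ∧ p.1.Subsingleton}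

/-!
Push `F` forward to an ultrafilter on the vertices. Every separation in `starP F` has its big side
in that ultrafilter and its small side outside it (a subsingleton is not in it since `F` is
non-principal); this alone gives consistency, and (P2) because an ultrafilter containing a union
contains one of the two sets. The separations `(Aset s, Bset s)` all have separator `{none}`, but
the sets `Bset s \ Aset s = some '' s` have empty intersection since `F` has no common point.
-/

@[simp] lemma none_mem_Bset (s : Set ℕ) : none ∈ Bset s := Or.inl rfl

@[simp] lemma some_mem_Bset {s : Set ℕ} {i : ℕ} : some i ∈ Bset s ↔ i ∈ s := by
  simp [Bset]

@[simp] lemma none_mem_Aset (s : Set ℕ) : none ∈ Aset s := Or.inr rfl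

@[simp] lemma some_mem_Aset {s : Set ℕ} {i : ℕ} : some i ∈ Aset s ↔ i ∉ s := by
  simp [Aset]

lemma preimage_some_Bset (s : Set ℕ) : some ⁻¹' Bset s = s := by
  ext i; simp

lemma preimage_some_Aset (s : Set ℕ) : some ⁻¹' Aset s = sᶜ := by
  ext i; simp

lemma Aset_inter_Bset (s : Set ℕ) : Aset s ∩ Bset s = {none} := by
  ext (_ | i) <;> simp

lemma Bset_diff_Aset (s : Set ℕ) : Bset s \ Aset s = some '' s := by
  ext (_ | i) <;> simp

lemma isSep_univ (G : SimpleGraph V) (A : Set V) : IsSep G A univ :=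
  ⟨union_univ A, fun _ ha _ _ _ => ha.2 (mem_univ _)⟩

-- Every edge of the star contains the centre, which lies in both `Aset s` and `Bset s`.
lemma isSep_Aset_Bset (s : Set ℕ) : IsSep starGraph (Aset s) (Bset s) := by
  refine ⟨?_, ?_⟩
  · ext (_ | i) <;> simp [em']
  · rintro a ⟨-, ha⟩ b ⟨-, hb⟩ hab
    rcases (SimpleGraph.fromRel_adj _ _ _).mp hab |>.2 with rfl | rfl
    exacts [ha (none_mem_Bset s), hb (none_mem_Aset s)]

lemma isSep_of_mem_starP {F : Ultrafilter ℕ} {p : Set (Option ℕ) × Set (Option ℕ)}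
    (hp : p ∈ starP F) : IsSep starGraph p.1 p.2 := by
  rcases hp with ⟨s, -, rfl⟩ | ⟨h2, -⟩
  · exact isSep_Aset_Bset s
  · exact h2 ▸ isSep_univ starGraph p.1

def OrientedBy (𝓕 : Filter V) (P : Set (Set V × Set V)) : Prop :=
  ∀ p ∈ P, p.1 ∉ 𝓕 ∧ p.2 ∈ 𝓕

lemma OrientedBy.consistent {𝓕 : Filter V} {P : Set (Set V × Set V)} (h : OrientedBy 𝓕 P) :
    Consistent P := fun _ _ _ _ hAB ⟨hCA, _⟩ hDC =>
  (h _ hAB).1 (Filter.mem_of_superset (h _ hDC).2 hCA)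

lemma OrientedBy.p2 {𝓤 : Ultrafilter V} {P : Set (Set V × Set V)} (h : OrientedBy 𝓤 P) :
    P2 P := fun p hp q hq hr =>
  (Ultrafilter.union_mem_iff.mp (h _ hr).2).elim (h p hp).1 (h q hq).1

lemma orientedBy_starP {F : Ultrafilter ℕ} (hF : ∀ s ∈ F, s.Infinite) :
    OrientedBy (F.map some : Filter (Option ℕ)) (starP F) := by
  rintro p (⟨s, hs, rfl⟩ | ⟨h2, h1⟩) <;> simp only [Ultrafilter.mem_coe, Ultrafilter.mem_map]
  · rw [preimage_some_Aset, preimage_some_Bset, Ultrafilter.compl_mem_iff_notMem]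
    exact ⟨not_not_intro hs, hs⟩
  · rw [h2, preimage_univ]
    exact ⟨fun h => hF _ h (h1.preimage (Option.some_injective ℕ)).finite, Filter.univ_mem⟩

lemma not_principal_starP {F : Ultrafilter ℕ} (hF : ∀ s ∈ F, s.Infinite) :
    ¬ Principal (starP F) := by
  intro hP
  obtain ⟨x, hx⟩ := hP {p | ∃ s ∈ F, p = (Aset s, Bset s)} subset_union_left
    ⟨_, univ, Filter.univ_mem, rfl⟩ (by rintro _ ⟨s, -, rfl⟩ _ ⟨t, -, rfl⟩; simp [Aset_inter_Bset])
  have hxs : ∀ s ∈ F, x ∈ some '' s := fun s hs =>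
    Bset_diff_Aset s ▸ mem_iInter₂.mp hx _ ⟨s, hs, rfl⟩
  obtain ⟨i, -, rfl⟩ := hxs univ Filter.univ_mem
  have hi : ({i}ᶜ : Set ℕ) ∈ F :=
    Ultrafilter.compl_mem_iff_notMem.mpr fun h => hF _ h (finite_singleton i)
  obtain ⟨j, hj, hji⟩ := hxs _ hi
  exact hj (Option.some_injective ℕ hji)

/-- for a non-principal ultrafilter `F` on `ℕ`, the set `starP F` is
a set of separations of the infinite star that is a profile but not principal. -/
theorem nonprincipal_profile_exists (F : Ultrafilter ℕ)
    (hF : ∀ s ∈ F, s.Infinite) :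
    (∀ p ∈ starP F, IsSep starGraph p.1 p.2) ∧
    Consistent (starP F) ∧ P2 (starP F) ∧ ¬ Principal (starP F) :=
  ⟨fun _ => isSep_of_mem_starP, (orientedBy_starP hF).consistent, (orientedBy_starP hF).p2,
    not_principal_starP hF⟩
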